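/- Two epistemic logic programs over the same finite atom domain and epistemic-literal domain are strongly equivalent (i.e., strongly ELP-CWV-equivalent) if and only if they have the same SE-function. -/

import Mathlib

variable {V : Type}

/-- A (default-negation) literal: an atom or its default negation. -/
inductive Lit (V : Type) : Type
  | pos (a : V) : Lit V
  | neg (a : V) : Lit V

namespace Lit

/-- `I ⊨ ℓ`. -/
def sat (I : Set V) : Lit V → Prop
  | pos a => a ∈ I
  | neg a => a ∉ I

/-- The complementary literal (so that `I ⊨ ¬ℓ` iff `I ⊨ ℓ.flip`). -/
def flip : Lit V → Lit V
  | pos a => neg a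
  | neg a => pos a

/-- The underlying atom of a literal. -/
def atom : Lit V → V
  | pos a => a
  | neg a => a

end Lit

/-- A standard (ASP) rule `head ← pos, {¬ℓ | ℓ ∈ neg}`; the set `neg` collects the
literals occurring under one extra default negation in the body (so an atom `a ∈ pos`
is a positive body atom, `Lit.pos c ∈ neg` encodes the body element `¬c`, and
`Lit.neg d ∈ neg` encodes the doubly negated body element `¬¬d`). -/
structure Rule (V : Type) : Type where
  head : Set V
  pos : Set V
  neg : Set (Lit V)

namespace Rule

/-- The rule only uses atoms from `A`. -/
def wf (r : Rule V) (A : Set V) : Prop :=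
  r.head ⊆ A ∧ r.pos ⊆ A ∧ ∀ ℓ ∈ r.neg, ℓ.atom ∈ A

/-- `I` is a model of the rule. -/
def sat (I : Set V) (r : Rule V) : Prop :=
  (r.pos ⊆ I ∧ ∀ ℓ ∈ r.neg, ¬ ℓ.sat I) → ∃ a ∈ r.head, a ∈ I

/-- `X` satisfies the GL-reduct of the rule w.r.t. `Y`: if the rule survives the
reduct (no negated body literal is satisfied by `Y`), then `X` satisfies the
remaining rule `head ← pos`. -/
def redSat (Y X : Set V) (r : Rule V) : Prop :=
  (∀ ℓ ∈ r.neg, ¬ ℓ.sat Y) → (r.pos ⊆ X → ∃ a ∈ r.head, a ∈ X)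

end Rule

/-- A ground logic program `(𝒜, ℛ)`. -/
structure Program (V : Type) : Type where
  A : Set V
  R : Set (Rule V)

namespace Program

def wf (P : Program V) : Prop := ∀ r ∈ P.R, r.wf P.A

/-- `I ⊨ P`. -/
def model (P : Program V) (I : Set V) : Prop := ∀ r ∈ P.R, r.sat I

/-- `X ⊨ P^Y` (the GL-reduct). -/
def redModel (P : Program V) (Y X : Set V) : Prop := ∀ r ∈ P.R, r.redSat Y X

/-- `M` is an answer set of `P`. -/
def answerSet (P : Program V) (M : Set V) : Prop :=
  M ⊆ P.A ∧ P.model M ∧ ¬ ∃ M', M' ⊂ M ∧ P.redModel M M'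

/-- `AS(P)`, the set of answer sets. -/
def AS (P : Program V) : Set (Set V) := {M | P.answerSet M}

/-- The set of SE-models `(X,Y)` with `X ⊆ Y ⊆ 𝒜`, `Y ⊨ P` and `X ⊨ P^Y`. -/
def SE (P : Program V) : Set (Set V × Set V) :=
  {p | p.1 ⊆ p.2 ∧ p.2 ⊆ P.A ∧ P.model p.2 ∧ P.redModel p.2 p.1}

/-- Componentwise union of programs. -/
def union (P₁ P₂ : Program V) : Program V := ⟨P₁.A ∪ P₂.A, P₁.R ∪ P₂.R⟩

/-- Strong equivalence of plain logic programs. -/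
def strongEq (P₁ P₂ : Program V) : Prop :=
  ∀ P : Program V, P.wf → (P₁.union P).AS = (P₂.union P).AS

end Program

/-- An ELP rule `head ← opos, ¬oneg, not epos, ¬ not eneg`: epistemic literals `not ℓ`
are identified with the literal `ℓ` they negate; `epos` collects the literals occurring
under plain epistemic negation and `eneg` those occurring under default-negated
epistemic negation. -/
structure ERule (V : Type) : Type where
  head : Set V
  opos : Set V
  oneg : Set (Lit V)
  epos : Set (Lit V)
  eneg : Set (Lit V)

namespace ERule

/-- The rule only uses atoms from `A` and epistemic literals from `E`. -/
def wf (r : ERule V) (A : Set V) (E : Set (Lit V)) : Prop :=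
  r.head ⊆ A ∧ r.opos ⊆ A ∧ (∀ ℓ ∈ r.oneg, ℓ.atom ∈ A) ∧ r.epos ⊆ E ∧ r.eneg ⊆ E

/-- The rule of the epistemic reduct w.r.t. guess `Φ` (meaningful when no `eneg`
literal belongs to `Φ`, in which case: epistemic literals `not ℓ ∈ Φ` become `⊤`,
the remaining `not ℓ` in `epos` become `¬ℓ`, and `¬ not ℓ` in `eneg` becomes `¬¬ℓ`,
i.e. `¬(ℓ.flip)`, reading triple negations as single ones). -/
def reduct (r : ERule V) (Φ : Set (Lit V)) : Rule V :=
  ⟨r.head, r.opos, r.oneg ∪ (r.epos \ Φ) ∪ (Lit.flip '' r.eneg)⟩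

/-- The underlying plain rule of an epistemic-negation-free ELP rule. -/
def toRule (r : ERule V) : Rule V := ⟨r.head, r.opos, r.oneg⟩

end ERule

/-- A plain rule viewed as an ELP rule. -/
def Rule.toERule (r : Rule V) : ERule V := ⟨r.head, r.pos, r.neg, ∅, ∅⟩

/-- An epistemic logic program `(𝒜, ℰ, ℛ)`. -/
structure ELP (V : Type) : Type where
  A : Set V
  E : Set (Lit V)
  R : Set (ERule V)

/-- `I` is `Φ`-compatible w.r.t. `E`. -/
def compatible (E Φ : Set (Lit V)) (I : Set (Set V)) : Prop :=
  I.Nonempty ∧ (∀ ℓ ∈ Φ, ∃ J ∈ I, ¬ ℓ.sat J) ∧ (∀ ℓ ∈ E \ Φ, ∀ J ∈ I, ℓ.sat J)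

/-- `Φ` is realizable in the set `I` of interpretations (w.r.t. `E`). -/
def realizableIn (E Φ : Set (Lit V)) (I : Set (Set V)) : Prop :=
  ∃ I', I' ⊆ I ∧ compatible E Φ I'

/-- A guess `Φ` is consistent w.r.t. `E`: whenever `E` contains both `not a` and
`not ¬a`, `Φ` contains at least one of them. -/
def consistentGuess (E Φ : Set (Lit V)) : Prop :=
  ∀ a : V, Lit.pos a ∈ E → Lit.neg a ∈ E → (Lit.pos a ∈ Φ ∨ Lit.neg a ∈ Φ)

namespace ELP

/-- Well-formedness: `E` consists of epistemic literals over `A`, and every rule is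
over `A` and `E`. -/
def wf (P : ELP V) : Prop :=
  (∀ ℓ ∈ P.E, ℓ.atom ∈ P.A) ∧ ∀ r ∈ P.R, r.wf P.A P.E

/-- An epistemic-negation-free (plain ASP) program viewed as an ELP. -/
def isASP (P : ELP V) : Prop := P.E = ∅ ∧ ∀ r ∈ P.R, r.epos = ∅ ∧ r.eneg = ∅

/-- Componentwise union of ELPs. -/
def union (P₁ P₂ : ELP V) : ELP V := ⟨P₁.A ∪ P₂.A, P₁.E ∪ P₂.E, P₁.R ∪ P₂.R⟩

/-- The epistemic reduct `P^Φ`: rules with some `eneg` literal in `Φ` are deleted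
(their body contains `¬⊤`), the remaining rules are reduced. -/
def eReduct (P : ELP V) (Φ : Set (Lit V)) : Program V :=
  ⟨P.A, {q | ∃ r ∈ P.R, (∀ ℓ ∈ r.eneg, ℓ ∉ Φ) ∧ q = r.reduct Φ}⟩

/-- `M` is a candidate world view of `P` w.r.t. the guess `Φ`. -/
def isCWVwrt (P : ELP V) (Φ : Set (Lit V)) (M : Set (Set V)) : Prop :=
  Φ ⊆ P.E ∧ M = (P.eReduct Φ).AS ∧ compatible P.E Φ M

/-- `M` is a candidate world view of `P`. -/
def isCWV (P : ELP V) (M : Set (Set V)) : Prop := ∃ Φ, P.isCWVwrt Φ M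

/-- `M` is a world view of `P`: a CWV whose associated guess is subset-maximal. -/
def isWV (P : ELP V) (M : Set (Set V)) : Prop :=
  ∃ Φ, P.isCWVwrt Φ M ∧ ∀ Φ' M', P.isCWVwrt Φ' M' → ¬ Φ ⊂ Φ'

/-- `Φ` is realizable in `P`: realizable in the set of models of `P^Φ`. -/
def realizable (P : ELP V) (Φ : Set (Lit V)) : Prop :=
  realizableIn P.E Φ {I | I ⊆ P.A ∧ (P.eReduct Φ).model I}

/-- The SE-function of `P`: `SE(Π^Φ)` if `Φ` is realizable in `P`, and `∅` otherwise. -/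
def SEfun (P : ELP V) (Φ : Set (Lit V)) : Set (Set V × Set V) :=
  {p | P.realizable Φ ∧ p ∈ (P.eReduct Φ).SE}

/-- CWV-equivalence. -/
def cwvEq (P₁ P₂ : ELP V) : Prop := ∀ M, P₁.isCWV M ↔ P₂.isCWV M

/-- WV-equivalence. -/
def wvEq (P₁ P₂ : ELP V) : Prop := ∀ M, P₁.isWV M ↔ P₂.isWV M

/-- Strong ELP-CWV-equivalence. -/
def strongELPCWVEq (P₁ P₂ : ELP V) : Prop :=
  ∀ Q : ELP V, Q.wf → cwvEq (P₁.union Q) (P₂.union Q)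

/-- Strong ELP-WV-equivalence. -/
def strongELPWVEq (P₁ P₂ : ELP V) : Prop :=
  ∀ Q : ELP V, Q.wf → wvEq (P₁.union Q) (P₂.union Q)

/-- Strong ASP-CWV-equivalence. -/
def strongASPCWVEq (P₁ P₂ : ELP V) : Prop :=
  ∀ Q : ELP V, Q.wf → Q.isASP → cwvEq (P₁.union Q) (P₂.union Q)

/-- Strong ASP-WV-equivalence. -/
def strongASPWVEq (P₁ P₂ : ELP V) : Prop :=
  ∀ Q : ELP V, Q.wf → Q.isASP → wvEq (P₁.union Q) (P₂.union Q)

end ELP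

/-- The Gelfond-CWA program `p' ← ¬ not ¬p` over `𝒜 = {p, p'}`, `ℰ = {not p, not ¬p}`. -/
def GelfondCWA (p p' : V) : ELP V :=
  ⟨{p, p'}, {Lit.pos p, Lit.neg p}, {⟨{p'}, ∅, ∅, ∅, {Lit.neg p}⟩}⟩

/-- The Shen-Eiter-CWA program `p' ← not p` over `𝒜 = {p, p'}`, `ℰ = {not p, not ¬p}`. -/
def ShenEiterCWA (p p' : V) : ELP V :=
  ⟨{p, p'}, {Lit.pos p, Lit.neg p}, {⟨{p'}, ∅, ∅, {Lit.pos p}, ∅⟩}⟩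


/-!
If the SE-functions agree, a candidate world view of `P₁ ∪ Q` for the guess `Φ` shows that
`Φ ∩ ℰ` is realizable in `P₁`; then `P₁^Φ` and `P₂^Φ` have the same SE-models, and by Turner's
theorem `(P₁ ∪ Q)^Φ = P₁^Φ ∪ Q^Φ` and `(P₂ ∪ Q)^Φ` have the same answer sets.

If they differ at `Φ`, then with `Ψ = Φ ∩ ℰ` the reducts `P₁^Ψ` and `P₂^Ψ` have different
SE-models and `Ψ` is realizable in one of them. The SE-models are recovered from Turner's test
"`Y` is an answer set of the program plus the test program for `(X, Y)`", so some pair fails the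
test for exactly one side. A plain context `Q` runs the tests for that pair and for all
`(J, J)`, each guarded by a fresh atom of which exactly one is chosen: the answer sets of
`(P₁ ∪ Q)^Ψ` then form a `Ψ`-compatible set different from those of `(P₂ ∪ Q)^Ψ`, and since
compatibility determines the guess, `P₁ ∪ Q` has a candidate world view that `P₂ ∪ Q` lacks.
-/

theorem Set.mem_iff_of_inter_eq {α : Type*} {A I J : Set α} {a : α} (h : I ∩ A = J ∩ A)
    (ha : a ∈ A) : a ∈ I ↔ a ∈ J := by
  simpa only [Set.mem_inter_iff, ha, and_true] using Set.ext_iff.mp h a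

theorem Lit.sat_congr {A I J : Set V} {ℓ : Lit V} (hℓ : ℓ.atom ∈ A) (h : I ∩ A = J ∩ A) :
    ℓ.sat I ↔ ℓ.sat J := by
  have hmem := Set.mem_iff_of_inter_eq h hℓ
  cases ℓ <;> simpa only [Lit.sat, Lit.atom, not_iff_not] using hmem

namespace Rule

variable {A I J : Set V} {r : Rule V}

theorem sat_congr (hr : r.wf A) (h : I ∩ A = J ∩ A) : r.sat I ↔ r.sat J := by
  obtain ⟨hhead, hpos, hneg⟩ := hr
  have hsub : r.pos ⊆ I ↔ r.pos ⊆ J :=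
    forall₂_congr fun a ha => Set.mem_iff_of_inter_eq h (hpos ha)
  unfold sat
  rw [hsub, forall₂_congr fun ℓ hℓ => not_congr (Lit.sat_congr (hneg ℓ hℓ) h),
    exists_congr fun a => and_congr_right fun ha => Set.mem_iff_of_inter_eq h (hhead ha)]

theorem redSat_congr {Y Y' : Set V} (hr : r.wf A) (hY : Y ∩ A = Y' ∩ A) (h : I ∩ A = J ∩ A) :
    r.redSat Y I ↔ r.redSat Y' J := by
  obtain ⟨hhead, hpos, hneg⟩ := hr
  have hsub : r.pos ⊆ I ↔ r.pos ⊆ J :=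
    forall₂_congr fun a ha => Set.mem_iff_of_inter_eq h (hpos ha)
  unfold redSat
  rw [hsub, forall₂_congr fun ℓ hℓ => not_congr (Lit.sat_congr (hneg ℓ hℓ) hY),
    exists_congr fun a => and_congr_right fun ha => Set.mem_iff_of_inter_eq h (hhead ha)]

theorem redSat_self_iff : r.redSat I I ↔ r.sat I :=
  ⟨fun h hbody => h hbody.2 hbody.1, fun h hneg hpos => h ⟨hpos, hneg⟩⟩

end Rule

namespace Program

variable {G H : Program V} {I J X Y : Set V}

theorem model_congr (hG : G.wf) (h : I ∩ G.A = J ∩ G.A) : G.model I ↔ G.model J :=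
  forall₂_congr fun r hr => Rule.sat_congr (hG r hr) h

theorem redModel_congr {Y' : Set V} (hG : G.wf) (hY : Y ∩ G.A = Y' ∩ G.A)
    (h : I ∩ G.A = J ∩ G.A) : G.redModel Y I ↔ G.redModel Y' J :=
  forall₂_congr fun r hr => Rule.redSat_congr (hG r hr) hY h

theorem redModel_self_iff : G.redModel I I ↔ G.model I :=
  forall₂_congr fun _ _ => Rule.redSat_self_iff

theorem model_union : (G.union H).model I ↔ G.model I ∧ H.model I :=
  ⟨fun h => ⟨fun r hr => h r (Or.inl hr), fun r hr => h r (Or.inr hr)⟩,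
    fun h r hr => hr.elim (h.1 r) (h.2 r)⟩

theorem redModel_union : (G.union H).redModel Y I ↔ G.redModel Y I ∧ H.redModel Y I :=
  ⟨fun h => ⟨fun r hr => h r (Or.inl hr), fun r hr => h r (Or.inr hr)⟩,
    fun h r hr => hr.elim (h.1 r) (h.2 r)⟩

theorem diag_mem_SE_iff : (I, I) ∈ G.SE ↔ I ⊆ G.A ∧ G.model I :=
  ⟨fun h => ⟨h.2.1, h.2.2.1⟩, fun h => ⟨subset_rfl, h.1, h.2, redModel_self_iff.2 h.2⟩⟩

theorem diag_mem_SE_of_mem {p : Set V × Set V} (h : p ∈ G.SE) : (p.2, p.2) ∈ G.SE :=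
  diag_mem_SE_iff.2 ⟨h.2.1, h.2.2.1⟩

theorem inter_mem_SE_iff (hG : G.wf) (hXY : X ⊆ Y) :
    (X ∩ G.A, Y ∩ G.A) ∈ G.SE ↔ G.model Y ∧ G.redModel Y X := by
  have hY : Y ∩ G.A ∩ G.A = Y ∩ G.A := inf_right_idem Y G.A
  have hX : X ∩ G.A ∩ G.A = X ∩ G.A := inf_right_idem X G.A
  simp only [SE, Set.mem_ofPred_eq, Set.inter_subset_right, true_and,
    Set.inter_subset_inter_left _ hXY, model_congr hG hY, redModel_congr hG hY hX]

theorem answerSet_union_iff (hG : G.wf) {M : Set V} :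
    (G.union H).answerSet M ↔ M ⊆ G.A ∪ H.A ∧ (M ∩ G.A, M ∩ G.A) ∈ G.SE ∧ H.model M ∧
      ¬ ∃ M' ⊂ M, (M' ∩ G.A, M ∩ G.A) ∈ G.SE ∧ H.redModel M M' := by
  simp only [answerSet, model_union, redModel_union, inter_mem_SE_iff hG subset_rfl,
    redModel_self_iff, and_self]
  constructor
  · rintro ⟨hMA, ⟨hGM, hHM⟩, hmin⟩
    refine ⟨hMA, hGM, hHM, fun ⟨M', hM', hSE, hH⟩ => hmin ⟨M', hM', ?_, hH⟩⟩
    exact ((inter_mem_SE_iff hG hM'.subset).1 hSE).2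
  · rintro ⟨hMA, hGM, hHM, hmin⟩
    refine ⟨hMA, ⟨hGM, hHM⟩, fun ⟨M', hM', hG', hH⟩ => hmin ⟨M', hM', ?_, hH⟩⟩
    exact (inter_mem_SE_iff hG hM'.subset).2 ⟨hGM, hG'⟩

theorem AS_union_eq_of_SE_eq {G₁ G₂ : Program V} (hA : G₁.A = G₂.A) (hG₁ : G₁.wf)
    (hG₂ : G₂.wf) (hSE : G₁.SE = G₂.SE) : (G₁.union H).AS = (G₂.union H).AS := by
  ext M
  simp only [AS, Set.mem_ofPred_eq, answerSet_union_iff hG₁, answerSet_union_iff hG₂, hA, hSE]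

end Program

namespace compatible

variable {E E' Φ Φ' : Set (Lit V)} {I I' : Set (Set V)}

theorem guess_eq (h : compatible E Φ I) (h' : compatible E Φ' I) (hΦ : Φ ⊆ E)
    (hΦ' : Φ' ⊆ E) : Φ = Φ' := by
  ext ℓ
  constructor
  · intro hℓ
    by_contra hℓ'
    obtain ⟨J, hJ, hJℓ⟩ := h.2.1 ℓ hℓ
    exact hJℓ (h'.2.2 ℓ ⟨hΦ hℓ, hℓ'⟩ J hJ)
  · intro hℓ
    by_contra hℓ'
    obtain ⟨J, hJ, hJℓ⟩ := h'.2.1 ℓ hℓ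
    exact hJℓ (h.2.2 ℓ ⟨hΦ' hℓ, hℓ'⟩ J hJ)

theorem restrict (h : compatible E' Φ I) (hE : E ⊆ E') : compatible E (Φ ∩ E) I :=
  ⟨h.1, fun ℓ hℓ => h.2.1 ℓ hℓ.1, fun ℓ hℓ => h.2.2 ℓ ⟨hE hℓ.1, fun hΦ => hℓ.2 ⟨hΦ, hℓ.1⟩⟩⟩

theorem image (h : compatible E Φ I) (hΦ : Φ ⊆ E) {f : Set V → Set V}
    (hf : ∀ J ∈ I, ∀ ℓ ∈ E, ℓ.sat (f J) ↔ ℓ.sat J) : compatible E Φ (f '' I) := by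
  refine ⟨h.1.image f, fun ℓ hℓ => ?_, ?_⟩
  · obtain ⟨J, hJ, hJℓ⟩ := h.2.1 ℓ hℓ
    exact ⟨f J, Set.mem_image_of_mem f hJ, by rwa [hf J hJ ℓ (hΦ hℓ)]⟩
  · rintro ℓ hℓ _ ⟨J, hJ, rfl⟩
    exact (hf J hJ ℓ hℓ.1).2 (h.2.2 ℓ hℓ J hJ)

theorem mono (h : compatible E Φ I) (hII' : I ⊆ I') (hI' : ∀ ℓ ∈ E \ Φ, ∀ J ∈ I', ℓ.sat J) :
    compatible E Φ I' :=
  ⟨h.1.mono hII', fun ℓ hℓ => (h.2.1 ℓ hℓ).imp fun _ hJ => ⟨hII' hJ.1, hJ.2⟩, hI'⟩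

end compatible

theorem Lit.atom_flip (ℓ : Lit V) : ℓ.flip.atom = ℓ.atom := by
  cases ℓ <;> rfl

theorem ERule.reduct_inter {E : Set (Lit V)} {r : ERule V} (hr : r.epos ⊆ E)
    (Φ : Set (Lit V)) : r.reduct (Φ ∩ E) = r.reduct Φ := by
  simp only [ERule.reduct, Set.sdiff_inter, Set.sdiff_eq_empty.2 hr, Set.union_empty]

theorem Rule.toERule_reduct (r : Rule V) (Φ : Set (Lit V)) : r.toERule.reduct Φ = r := by
  simp [Rule.toERule, ERule.reduct]

def Program.toELP (P : Program V) : ELP V := ⟨P.A, ∅, Rule.toERule '' P.R⟩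

theorem Program.toELP_wf {P : Program V} (hP : P.wf) : P.toELP.wf := by
  refine ⟨fun ℓ hℓ => absurd hℓ (Set.notMem_empty ℓ), ?_⟩
  rintro _ ⟨r, hr, rfl⟩
  obtain ⟨hhead, hpos, hneg⟩ := hP r hr
  exact ⟨hhead, hpos, hneg, Set.empty_subset _, Set.empty_subset _⟩

theorem Program.eReduct_toELP (P : Program V) (Φ : Set (Lit V)) : P.toELP.eReduct Φ = P := by
  have heneg : ∀ r : Rule V, r.toERule.eneg = ∅ := fun _ => rfl
  simp [ELP.eReduct, Program.toELP, Rule.toERule_reduct, heneg]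

namespace ELP

variable {P Q : ELP V} {Φ : Set (Lit V)}

theorem eReduct_union : (P.union Q).eReduct Φ = (P.eReduct Φ).union (Q.eReduct Φ) := by
  simp only [eReduct, union, Program.union, Program.mk.injEq, true_and]
  ext q
  simp only [Set.mem_union, Set.mem_ofPred_eq, or_and_right, exists_or]

theorem eReduct_inter (hP : P.wf) (Φ : Set (Lit V)) : P.eReduct (Φ ∩ P.E) = P.eReduct Φ := by
  simp only [eReduct, Program.mk.injEq, true_and]
  ext q
  refine exists_congr fun r => and_congr_right fun hr => ?_
  obtain ⟨-, -, -, hepos, heneg⟩ := hP.2 r hr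
  rw [ERule.reduct_inter hepos]
  exact and_congr_left' (forall₂_congr fun ℓ hℓ => by simp [heneg hℓ])

theorem eReduct_wf (hP : P.wf) (Φ : Set (Lit V)) : (P.eReduct Φ).wf := by
  rintro _ ⟨r, hr, -, rfl⟩
  obtain ⟨hhead, hopos, honeg, hepos, heneg⟩ := hP.2 r hr
  refine ⟨hhead, hopos, ?_⟩
  rintro ℓ ((hℓ | hℓ) | ⟨ℓ, hℓ, rfl⟩)
  · exact honeg ℓ hℓ
  · exact hP.1 ℓ (hepos hℓ.1)
  · rw [Lit.atom_flip]
    exact hP.1 ℓ (heneg hℓ)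

theorem realizable_iff_SE : P.realizable Φ ↔
    realizableIn P.E Φ {I | (I, I) ∈ (P.eReduct Φ).SE} := by
  simp only [realizable, Program.diag_mem_SE_iff]
  rfl

theorem realizable.inter (hP : P.wf) (h : P.realizable Φ) : P.realizable (Φ ∩ P.E) := by
  obtain ⟨I', hI', hcomp⟩ := h
  exact ⟨I', by rwa [eReduct_inter hP], hcomp.restrict subset_rfl⟩

theorem SEfun_of_realizable (h : P.realizable Φ) : P.SEfun Φ = (P.eReduct Φ).SE := by
  ext p
  exact and_iff_right h

theorem SEfun_of_not_realizable (h : ¬ P.realizable Φ) : P.SEfun Φ = ∅ :=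
  Set.eq_empty_of_forall_notMem fun _ hp => h hp.1

theorem SEfun_nonempty (h : P.realizable Φ) : (P.SEfun Φ).Nonempty := by
  rw [SEfun_of_realizable h]
  obtain ⟨I', hI', ⟨I, hI⟩, -⟩ := h
  exact ⟨(I, I), Program.diag_mem_SE_iff.2 (hI' hI)⟩

theorem SEfun_eq_of_SE_eq {P₁ P₂ : ELP V} (hE : P₁.E = P₂.E)
    (h : (P₁.eReduct Φ).SE = (P₂.eReduct Φ).SE) : P₁.SEfun Φ = P₂.SEfun Φ := by
  ext p
  simp only [SEfun, Set.mem_ofPred_eq, realizable_iff_SE, hE, h]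

theorem realizable_of_isCWVwrt_union (hP : P.wf) {M : Set (Set V)} (h : (P.union Q).isCWVwrt Φ M) : P.realizable (Φ ∩ P.E) := by
  obtain ⟨-, rfl, hcomp⟩ := h
  refine ⟨(· ∩ P.A) '' ((P.union Q).eReduct Φ).AS, ?_, ?_⟩
  · rintro _ ⟨N, hN, rfl⟩
    rw [eReduct_union] at hN
    refine ⟨Set.inter_subset_right, ?_⟩
    rw [eReduct_inter hP]
    exact (Program.model_congr (eReduct_wf hP Φ) (inf_right_idem N P.A)).2
      (Program.model_union.1 hN.2.1).1
  · exact (hcomp.restrict Set.subset_union_left).image Set.inter_subset_right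
      fun N _ ℓ hℓ => Lit.sat_congr (hP.1 ℓ hℓ) (inf_right_idem N P.A)

variable {A : Set V} {E : Set (Lit V)} {R₁ R₂ : Set (ERule V)}

theorem SE_eq_of_SEfun_eq (hre : (ELP.mk A E R₁).realizable Φ)
    (h : (ELP.mk A E R₁).SEfun Φ = (ELP.mk A E R₂).SEfun Φ) :
    ((ELP.mk A E R₁).eReduct Φ).SE = ((ELP.mk A E R₂).eReduct Φ).SE := by
  have hre₂ : (ELP.mk A E R₂).realizable Φ := by
    obtain ⟨_, hp⟩ := h ▸ SEfun_nonempty hre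
    exact hp.1
  rw [← SEfun_of_realizable hre, h, SEfun_of_realizable hre₂]

theorem isCWV_union_of_SEfun_eq (hwf₁ : (ELP.mk A E R₁).wf) (hwf₂ : (ELP.mk A E R₂).wf)
    (h : ∀ Φ, (ELP.mk A E R₁).SEfun Φ = (ELP.mk A E R₂).SEfun Φ) (Q : ELP V)
    {M : Set (Set V)} (hM : ((ELP.mk A E R₁).union Q).isCWV M) :
    ((ELP.mk A E R₂).union Q).isCWV M := by
  obtain ⟨Φ, hΦ, hMAS, hcomp⟩ := hM
  have hSE := SE_eq_of_SEfun_eq (realizable_of_isCWVwrt_union hwf₁ ⟨hΦ, hMAS, hcomp⟩)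
    (h (Φ ∩ E))
  refine ⟨Φ, hΦ, ?_, hcomp⟩
  rw [hMAS, eReduct_union, eReduct_union, ← eReduct_inter hwf₁, ← eReduct_inter hwf₂]
  exact Program.AS_union_eq_of_SE_eq rfl (eReduct_wf hwf₁ _) (eReduct_wf hwf₂ _) hSE

end ELP

theorem Set.union_singleton_inter_of_notMem {α : Type*} {A Y : Set α} {t : α} (hY : Y ⊆ A)
    (ht : t ∉ A) : (Y ∪ {t}) ∩ A = Y := by
  rw [Set.union_inter_distrib_right, Set.inter_eq_left.2 hY, Set.singleton_inter_eq_empty.2 ht,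
    Set.union_empty]

structure IsTagging (A : Set V) (S : Set (Set V × Set V)) (c : Set V × Set V → V) : Prop where
  fst_subset_snd : ∀ p ∈ S, p.1 ⊆ p.2
  snd_subset : ∀ p ∈ S, p.2 ⊆ A
  tag_notMem : ∀ p ∈ S, c p ∉ A
  injOn : Set.InjOn c S

inductive TagRule (A : Set V) (S : Set (Set V × Set V)) (c : Set V × Set V → V) : Rule V → Prop
  | choice {p} : p ∈ S → TagRule A S c ⟨{c p}, ∅, Lit.pos '' (c '' S \ {c p})⟩
  | exclusive {p q} : p ∈ S → q ∈ S → c p ≠ c q → TagRule A S c ⟨∅, {c p, c q}, ∅⟩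
  | lower {p x} : p ∈ S → x ∈ p.1 → TagRule A S c ⟨{x}, {c p}, ∅⟩
  | closure {p x y} : p ∈ S → x ∈ p.2 \ p.1 → y ∈ p.2 \ p.1 → TagRule A S c ⟨{x}, {y, c p}, ∅⟩
  | upper {p a} : p ∈ S → a ∈ A \ p.2 → TagRule A S c ⟨∅, {c p, a}, ∅⟩
  | force {p x} : p ∈ S → x ∈ p.2 \ p.1 → TagRule A S c ⟨∅, {c p}, {Lit.pos x}⟩

/-- Turner's test programs for all pairs of `S` at once: exactly one tag `c p` is chosen, and
for `p = (X, Y)` it forces the atoms of `Y`, while in the reduct it derives `X` and the atoms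
of `Y \ X` only all together. -/
def tagProgram (A : Set V) (S : Set (Set V × Set V)) (c : Set V × Set V → V) : Program V :=
  ⟨A ∪ c '' S, {r | TagRule A S c r}⟩

/-- Turner's test on `p = (X, Y)`: `Y ∪ {t}` is an answer set of `G` together with the test
program for `p` tagged by `t` (`IsTagging.AS_union_tagProgram`). -/
def Program.accepts (G : Program V) (p : Set V × Set V) : Prop :=
  (p.2, p.2) ∈ G.SE ∧ (p.1 = p.2 ∨ p ∉ G.SE)

section TagProgram

variable {A : Set V} {S : Set (Set V × Set V)} {c : Set V × Set V → V}

theorem exists_eq_of_model_tagProgram (hS : S.Nonempty) {M : Set V}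
    (hMA : M ⊆ A ∪ c '' S) (hM : (tagProgram A S c).model M) : ∃ p ∈ S, M = p.2 ∪ {c p} := by
  have hrule : ∀ {r}, TagRule A S c r → r.sat M := fun hr => hM _ hr
  obtain ⟨p, hp, hpM⟩ : ∃ p ∈ S, c p ∈ M := by
    by_contra! hnone
    obtain ⟨p, hp⟩ := hS
    obtain ⟨_, rfl, h⟩ := hrule (TagRule.choice hp) ⟨Set.empty_subset _, by
      rintro _ ⟨_, ⟨⟨q, hq, rfl⟩, -⟩, rfl⟩
      exact hnone q hq⟩
    exact hnone p hp h
  have htag : ∀ q ∈ S, c q ∈ M → c q = c p := fun q hq hqM => by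
    by_contra hne
    obtain ⟨_, ⟨⟩, -⟩ := hrule (TagRule.exclusive hq hp hne)
      ⟨Set.insert_subset hqM (Set.singleton_subset_iff.2 hpM), by simp⟩
  have hsnd : p.2 ⊆ M := fun x hx => by
    by_cases hx1 : x ∈ p.1
    · obtain ⟨_, rfl, h⟩ := hrule (TagRule.lower hp hx1)
        ⟨Set.singleton_subset_iff.2 hpM, by simp⟩
      exact h
    · by_contra hxM
      obtain ⟨_, ⟨⟩, -⟩ := hrule (TagRule.force hp ⟨hx, hx1⟩)
        ⟨Set.singleton_subset_iff.2 hpM, by simpa [Lit.sat] using hxM⟩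
  have hA : M ∩ A ⊆ p.2 := fun a ⟨haM, haA⟩ => by
    by_contra ha
    obtain ⟨_, ⟨⟩, -⟩ := hrule (TagRule.upper hp ⟨haA, ha⟩)
      ⟨Set.insert_subset hpM (Set.singleton_subset_iff.2 haM), by simp⟩
  refine ⟨p, hp, Set.Subset.antisymm (fun x hx => ?_)
    (Set.union_subset hsnd (Set.singleton_subset_iff.2 hpM))⟩
  rcases hMA hx with hxA | ⟨q, hq, rfl⟩
  · exact Or.inl (hA ⟨hx, hxA⟩)
  · exact Or.inr (htag q hq hx)

namespace IsTagging

variable {p : Set V × Set V}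

theorem eq_of_tag_mem (hT : IsTagging A S c) (hp : p ∈ S) {q : Set V × Set V} (hq : q ∈ S)
    (h : c q ∈ p.2 ∪ {c p}) : q = p :=
  h.elim (fun h => absurd (hT.snd_subset p hp h) (hT.tag_notMem q hq)) (hT.injOn hq hp)

theorem model_tagProgram (hT : IsTagging A S c) (hp : p ∈ S) :
    (tagProgram A S c).model (p.2 ∪ {c p}) := by
  have htag : ∀ {q}, q ∈ S → c q ∈ p.2 ∪ {c p} → q = p := hT.eq_of_tag_mem hp
  rintro r (hr : TagRule A S c r)
  cases hr with
  | @choice q hq =>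
    by_cases hqp : c q = c p
    · exact fun _ => ⟨c q, rfl, Or.inr hqp⟩
    · rintro ⟨-, hneg⟩
      exact absurd (Or.inr rfl) (hneg (Lit.pos (c p)) ⟨c p, ⟨⟨p, hp, rfl⟩, Ne.symm hqp⟩, rfl⟩)
  | @exclusive q q' hq hq' hne =>
    rintro ⟨hpos, -⟩
    exact absurd (by rw [htag hq (hpos (Or.inl rfl)), htag hq' (hpos (Or.inr rfl))]) hne
  | @lower q x hq hx =>
    rintro ⟨hpos, -⟩
    obtain rfl := htag hq (hpos rfl)
    exact ⟨x, rfl, Or.inl (hT.fst_subset_snd q hq hx)⟩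
  | @closure q x y hq hx hy =>
    rintro ⟨hpos, -⟩
    obtain rfl := htag hq (hpos (Or.inr rfl))
    exact ⟨x, rfl, Or.inl hx.1⟩
  | @upper q a hq ha =>
    rintro ⟨hpos, -⟩
    obtain rfl := htag hq (hpos (Or.inl rfl))
    rcases hpos (Or.inr rfl) with h | rfl
    · exact absurd h ha.2
    · exact absurd ha.1 (hT.tag_notMem q hq)
  | @force q x hq hx =>
    rintro ⟨hpos, hneg⟩
    obtain rfl := htag hq (hpos rfl)
    exact absurd (Or.inl hx.1) (hneg (Lit.pos x) rfl)

theorem redModel_tagProgram_fst (hT : IsTagging A S c) (hp : p ∈ S) :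
    (tagProgram A S c).redModel (p.2 ∪ {c p}) (p.1 ∪ {c p}) := by
  have htag : ∀ {q}, q ∈ S → c q ∈ p.1 ∪ {c p} → q = p := fun hq h =>
    hT.eq_of_tag_mem hp hq (Set.union_subset_union_left _ (hT.fst_subset_snd p hp) h)
  rintro r (hr : TagRule A S c r)
  cases hr with
  | @choice q hq =>
    by_cases hqp : c q = c p
    · exact fun _ _ => ⟨c q, rfl, Or.inr hqp⟩
    · intro hneg
      exact absurd (Or.inr rfl) (hneg (Lit.pos (c p)) ⟨c p, ⟨⟨p, hp, rfl⟩, Ne.symm hqp⟩, rfl⟩)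
  | @exclusive q q' hq hq' hne =>
    intro _ hpos
    exact absurd (by rw [htag hq (hpos (Or.inl rfl)), htag hq' (hpos (Or.inr rfl))]) hne
  | @lower q x hq hx =>
    intro _ hpos
    obtain rfl := htag hq (hpos rfl)
    exact ⟨x, rfl, Or.inl hx⟩
  | @closure q x y hq hx hy =>
    intro _ hpos
    obtain rfl := htag hq (hpos (Or.inr rfl))
    rcases hpos (Or.inl rfl) with h | rfl
    · exact absurd h hy.2
    · exact absurd (hT.snd_subset q hq hy.1) (hT.tag_notMem q hq)
  | @upper q a hq ha =>
    intro _ hpos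
    obtain rfl := htag hq (hpos (Or.inl rfl))
    rcases hpos (Or.inr rfl) with h | rfl
    · exact absurd (hT.fst_subset_snd q hq h) ha.2
    · exact absurd ha.1 (hT.tag_notMem q hq)
  | @force q x hq hx =>
    intro hneg hpos
    obtain rfl := htag hq (hpos rfl)
    exact absurd (Or.inl hx.1) (hneg (Lit.pos x) rfl)

theorem redModel_tagProgram_iff (hT : IsTagging A S c) (hp : p ∈ S) {M' : Set V}
    (hM' : M' ⊆ p.2 ∪ {c p}) :
    (tagProgram A S c).redModel (p.2 ∪ {c p}) M' ↔ M' = p.1 ∪ {c p} ∨ M' = p.2 ∪ {c p} := by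
  refine ⟨fun hred => ?_, ?_⟩
  · have hrule : ∀ {r}, TagRule A S c r → r.redSat (p.2 ∪ {c p}) M' := fun hr => hred _ hr
    have hpM' : c p ∈ M' := by
      obtain ⟨_, rfl, h⟩ := hrule (TagRule.choice hp) (by
        rintro _ ⟨_, ⟨⟨q, hq, rfl⟩, hne⟩, rfl⟩ hsat
        exact hne (congrArg c (hT.eq_of_tag_mem hp hq hsat))) (Set.empty_subset _)
      exact h
    have hfst : p.1 ⊆ M' := fun x hx => by
      obtain ⟨_, rfl, h⟩ := hrule (TagRule.lower hp hx) (by simp)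
        (Set.singleton_subset_iff.2 hpM')
      exact h
    by_cases hmeet : ∃ y ∈ p.2 \ p.1, y ∈ M'
    · obtain ⟨y, hy, hyM'⟩ := hmeet
      refine Or.inr (Set.Subset.antisymm hM'
        (Set.union_subset (fun x hx => ?_) (Set.singleton_subset_iff.2 hpM')))
      by_cases hx1 : x ∈ p.1
      · exact hfst hx1
      · obtain ⟨_, rfl, h⟩ := hrule (TagRule.closure hp ⟨hx, hx1⟩ hy) (by simp)
          (Set.insert_subset hyM' (Set.singleton_subset_iff.2 hpM'))
        exact h
    · push Not at hmeet
      refine Or.inl (Set.Subset.antisymm (fun x hx => ?_)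
        (Set.union_subset hfst (Set.singleton_subset_iff.2 hpM')))
      rcases hM' hx with hx2 | hx'
      · by_cases hx1 : x ∈ p.1
        · exact Or.inl hx1
        · exact absurd hx (hmeet x ⟨hx2, hx1⟩)
      · exact Or.inr hx'
  · rintro (rfl | rfl)
    · exact hT.redModel_tagProgram_fst hp
    · exact Program.redModel_self_iff.2 (hT.model_tagProgram hp)

theorem injOn_tagged (hT : IsTagging A S c) : Set.InjOn (fun p => p.2 ∪ {c p}) S :=
  fun p hp q hq h => hT.eq_of_tag_mem hq hp <| by
    rw [← show p.2 ∪ {c p} = q.2 ∪ {c q} from h]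
    exact Or.inr rfl

theorem tagProgram_wf (hT : IsTagging A S c) : (tagProgram A S c).wf := by
  have htag : ∀ {q}, q ∈ S → c q ∈ A ∪ c '' S := fun hq => Or.inr ⟨_, hq, rfl⟩
  have hatom : ∀ {q x}, q ∈ S → x ∈ q.2 → x ∈ A ∪ c '' S :=
    fun hq hx => Or.inl (hT.snd_subset _ hq hx)
  rintro r (hr : TagRule A S c r)
  cases hr with
  | choice hq =>
    refine ⟨Set.singleton_subset_iff.2 (htag hq), Set.empty_subset _, ?_⟩
    rintro _ ⟨_, ⟨⟨q', hq', rfl⟩, -⟩, rfl⟩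
    exact htag hq'
  | exclusive hq hq' _ => simp [Rule.wf, tagProgram, Set.insert_subset_iff, htag hq, htag hq']
  | lower hq hx =>
    simp [Rule.wf, tagProgram, htag hq, hatom hq (hT.fst_subset_snd _ hq hx)]
  | closure hq hx hy => simp [Rule.wf, tagProgram, Set.insert_subset_iff, htag hq, hatom hq hx.1, hatom hq hy.1]
  | upper hq ha => simp [Rule.wf, tagProgram, Set.insert_subset_iff, htag hq, Or.inl ha.1]
  | force hq hx => simp [Rule.wf, tagProgram, htag hq, Lit.atom, hT.snd_subset _ hq hx.1]

theorem AS_union_tagProgram (hT : IsTagging A S c) (hS : S.Nonempty) {G : Program V}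
    (hG : G.wf) (hGA : G.A = A) :
    (G.union (tagProgram A S c)).AS = (fun p => p.2 ∪ {c p}) '' {p ∈ S | G.accepts p} := by
  subst hGA
  have hY : ∀ p ∈ S, (p.2 ∪ {c p}) ∩ G.A = p.2 := fun p hp =>
    Set.union_singleton_inter_of_notMem (hT.snd_subset p hp) (hT.tag_notMem p hp)
  have hX : ∀ p ∈ S, (p.1 ∪ {c p}) ∩ G.A = p.1 := fun p hp =>
    Set.union_singleton_inter_of_notMem ((hT.fst_subset_snd p hp).trans (hT.snd_subset p hp))
      (hT.tag_notMem p hp)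
  ext M
  simp only [Program.AS, Set.mem_ofPred_eq, Program.answerSet_union_iff hG, Set.mem_image]
  constructor
  · rintro ⟨hMA, hSE, hQ, hmin⟩
    obtain ⟨p, hp, rfl⟩ := exists_eq_of_model_tagProgram hS
      (hMA.trans (Set.union_subset Set.subset_union_left subset_rfl)) hQ
    rw [hY p hp] at hSE hmin
    refine ⟨p, ⟨hp, hSE, ?_⟩, rfl⟩
    by_contra! h
    refine hmin ⟨p.1 ∪ {c p}, ?_, ?_, hT.redModel_tagProgram_fst hp⟩
    · exact (Set.union_subset_union_left _ (hT.fst_subset_snd p hp)).ssubset_of_ne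
        fun heq => h.1 (by rw [← hX p hp, heq, hY p hp])
    · rw [hX p hp]
      exact h.2
  · rintro ⟨p, ⟨hp, hSE, hacc⟩, rfl⟩
    rw [hY p hp]
    refine ⟨Set.union_subset (fun x hx => Or.inl (hT.snd_subset p hp hx))
      (Set.singleton_subset_iff.2 (Or.inr (Or.inr ⟨p, hp, rfl⟩))), hSE,
      hT.model_tagProgram hp, ?_⟩
    rintro ⟨M', hM', hM'SE, hred⟩
    rcases (hT.redModel_tagProgram_iff hp hM'.subset).1 hred with rfl | rfl
    · rw [hX p hp] at hM'SE
      exact hacc.elim (fun heq => hM'.ne (by rw [heq])) (· hM'SE)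
    · exact hM'.ne rfl

theorem sat_tagged_iff (hT : IsTagging A S c) (hp : p ∈ S) {ℓ : Lit V} (hℓ : ℓ.atom ∈ A) :
    ℓ.sat (p.2 ∪ {c p}) ↔ ℓ.sat p.2 :=
  Lit.sat_congr hℓ (by
    rw [Set.union_singleton_inter_of_notMem (hT.snd_subset p hp) (hT.tag_notMem p hp),
      Set.inter_eq_left.2 (hT.snd_subset p hp)])

theorem compatible_tagged (hT : IsTagging A S c) {G : Program V} {E Ψ : Set (Lit V)}
    (hE : ∀ ℓ ∈ E, ℓ.atom ∈ A) (hΨ : Ψ ⊆ E) (hre : realizableIn E Ψ {I | (I, I) ∈ G.SE})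
    (hdiag : ∀ J, (J, J) ∈ G.SE → (∀ ℓ ∈ E \ Ψ, ℓ.sat J) → (J, J) ∈ S)
    (hsat : ∀ q ∈ S, G.accepts q → ∀ ℓ ∈ E \ Ψ, ℓ.sat q.2) :
    compatible E Ψ ((fun q => q.2 ∪ {c q}) '' {q ∈ S | G.accepts q}) := by
  obtain ⟨I', hI', hcomp⟩ := hre
  have hS : ∀ J ∈ I', (J, J) ∈ S := fun J hJ => hdiag J (hI' hJ) fun ℓ hℓ => hcomp.2.2 ℓ hℓ J hJ
  refine (hcomp.image hΨ (f := fun J => J ∪ {c (J, J)})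
    fun J hJ ℓ hℓ => hT.sat_tagged_iff (hS J hJ) (hE ℓ hℓ)).mono ?_ ?_
  · rintro _ ⟨J, hJ, rfl⟩
    exact ⟨(J, J), ⟨hS J hJ, hI' hJ, Or.inl rfl⟩, rfl⟩
  · rintro ℓ hℓ _ ⟨q, ⟨hq, hqacc⟩, rfl⟩
    exact (hT.sat_tagged_iff hq (hE ℓ hℓ.1)).2 (hsat q hq hqacc ℓ hℓ)

end IsTagging

end TagProgram

theorem exists_isTagging [Infinite V] {A : Set V} (hA : A.Finite) {S : Set (Set V × Set V)}
    (hS : S.Finite) (hS₁ : ∀ p ∈ S, p.1 ⊆ p.2) (hS₂ : ∀ p ∈ S, p.2 ⊆ A) :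
    ∃ c, IsTagging A S c := by
  obtain ⟨f, hf⟩ := Set.countable_iff_exists_injOn.1 hS.countable
  let e := hA.infinite_compl.natEmbedding
  exact ⟨fun p => e (f p), hS₁, hS₂, fun p _ => (e (f p)).2,
    fun p hp q hq h => hf hp hq (e.injective (Subtype.coe_injective h))⟩

namespace Program

variable {G₁ G₂ : Program V}

theorem exists_accepts_ne_of_mem_SE {p : Set V × Set V} (h₁ : p ∈ G₁.SE) (h₂ : p ∉ G₂.SE) :
    ∃ q : Set V × Set V, q.1 ⊆ q.2 ∧ q.2 ⊆ G₁.A ∧ ¬ (G₁.accepts q ↔ G₂.accepts q) := by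
  by_cases hY : (p.2, p.2) ∈ G₂.SE
  · have hne : p.1 ≠ p.2 := fun heq => h₂ (by rwa [show p = (p.2, p.2) from Prod.ext heq rfl])
    refine ⟨p, h₁.1, h₁.2.1, fun h => ?_⟩
    exact (h.2 ⟨hY, Or.inr h₂⟩).2.elim hne (· h₁)
  · exact ⟨(p.2, p.2), subset_rfl, h₁.2.1,
      fun h => hY (h.1 ⟨diag_mem_SE_of_mem (p := p) h₁, Or.inl rfl⟩).1⟩

theorem exists_accepts_ne_of_SE_ne (h : G₁.SE ≠ G₂.SE) (hA : G₁.A = G₂.A) :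
    ∃ q : Set V × Set V, q.1 ⊆ q.2 ∧ q.2 ⊆ G₁.A ∧ ¬ (G₁.accepts q ↔ G₂.accepts q) := by
  obtain ⟨p, hp⟩ := not_forall.1 (mt Set.ext h)
  by_cases h₁ : p ∈ G₁.SE
  · exact exists_accepts_ne_of_mem_SE h₁ fun h₂ => hp (iff_of_true h₁ h₂)
  · have h₂ : p ∈ G₂.SE := by tauto
    obtain ⟨q, hq₁, hq₂, hq⟩ := exists_accepts_ne_of_mem_SE h₂ h₁
    exact ⟨q, hq₁, hA ▸ hq₂, fun h => hq h.symm⟩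

end Program

theorem ELP.cwvEq_comm {P₁ P₂ : ELP V} : P₁.cwvEq P₂ ↔ P₂.cwvEq P₁ :=
  ⟨fun h M => (h M).symm, fun h M => (h M).symm⟩

theorem ELP.not_cwvEq_of_AS_ne {P₁ P₂ : ELP V} {Ψ : Set (Lit V)} (hE : P₁.E = P₂.E)
    (hΨ : Ψ ⊆ P₁.E) (hcomp : compatible P₁.E Ψ (P₁.eReduct Ψ).AS)
    (hne : (P₁.eReduct Ψ).AS ≠ (P₂.eReduct Ψ).AS) : ¬ P₁.cwvEq P₂ := by
  intro h
  obtain ⟨Φ, hΦ, hAS, hcomp'⟩ := (h _).1 ⟨Ψ, hΨ, rfl, hcomp⟩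
  rw [← hE] at hΦ hcomp'
  obtain rfl := hcomp.guess_eq hcomp' hΨ hΦ
  exact hne hAS

section Completeness

variable {A : Set V} {E : Set (Lit V)} {R₁ R₂ : Set (ERule V)} {Ψ : Set (Lit V)}

/-- The context consists of Turner's test programs, with fresh tags, for `p` and for all
diagonal pairs `(J, J)` with `J ⊨ ℰ ∖ Ψ`; the diagonal ones make the answer sets on the `R₁`
side `Ψ`-compatible. -/
theorem exists_not_cwvEq_of_accepts_ne [Infinite V] (hA : A.Finite)
    (hwf₁ : (ELP.mk A E R₁).wf) (hwf₂ : (ELP.mk A E R₂).wf) (hΨ : Ψ ⊆ E)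
    (hre : (ELP.mk A E R₁).realizable Ψ) {p : Set V × Set V} (hp₁ : p.1 ⊆ p.2) (hp₂ : p.2 ⊆ A)
    (hacc : ¬ (((ELP.mk A E R₁).eReduct Ψ).accepts p ↔ ((ELP.mk A E R₂).eReduct Ψ).accepts p))
    (hsat : ((ELP.mk A E R₁).eReduct Ψ).accepts p → ∀ ℓ ∈ E \ Ψ, ℓ.sat p.2) :
    ∃ Q : ELP V, Q.wf ∧ ¬ ((ELP.mk A E R₁).union Q).cwvEq ((ELP.mk A E R₂).union Q) := by
  set K : Set (Set V) := {J | J ⊆ A ∧ ∀ ℓ ∈ E \ Ψ, ℓ.sat J}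
  set S := insert p ((fun J => (J, J)) '' K)
  have hSfin : S.Finite := ((hA.finite_subsets.subset fun J hJ => hJ.1).image _).insert p
  obtain ⟨c, hT⟩ := exists_isTagging hA hSfin
    (by rintro _ (rfl | ⟨J, -, rfl⟩); exacts [hp₁, subset_rfl])
    (by rintro _ (rfl | ⟨J, hJ, rfl⟩); exacts [hp₂, hJ.1])
  have hAS : ∀ {R}, (ELP.mk A E R).wf →
      (((ELP.mk A E R).union (tagProgram A S c).toELP).eReduct Ψ).AS =
        (fun q => q.2 ∪ {c q}) '' {q ∈ S | ((ELP.mk A E R).eReduct Ψ).accepts q} := fun hwf => by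
    rw [ELP.eReduct_union, Program.eReduct_toELP]
    exact hT.AS_union_tagProgram ⟨p, Set.mem_insert p _⟩ (ELP.eReduct_wf hwf Ψ) rfl
  refine ⟨(tagProgram A S c).toELP, Program.toELP_wf hT.tagProgram_wf,
    ELP.not_cwvEq_of_AS_ne rfl (Set.subset_union_of_subset_left hΨ _) ?_ ?_⟩
  · rw [hAS hwf₁, show ((ELP.mk A E R₁).union (tagProgram A S c).toELP).E = E from
      Set.union_empty E]
    refine hT.compatible_tagged hwf₁.1 hΨ (ELP.realizable_iff_SE.1 hre)
      (fun J hJ hJE => Or.inr ⟨J, ⟨(Program.diag_mem_SE_iff.1 hJ).1, hJE⟩, rfl⟩) ?_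
    rintro q (rfl | ⟨J, hJ, rfl⟩) hqacc
    exacts [hsat hqacc, hJ.2]
  · rw [hAS hwf₁, hAS hwf₂]
    intro heq
    have hmem := fun R => hT.injOn_tagged.mem_image_iff (Set.sep_subset S
      ((ELP.mk A E R).eReduct Ψ).accepts) (Set.mem_insert p _)
    have := hmem R₁
    rw [heq, hmem R₂, Set.mem_sep_iff, Set.mem_sep_iff] at this
    exact hacc (and_congr_right_iff.1 this.symm (Set.mem_insert p _))

theorem exists_not_cwvEq_of_SE_ne [Infinite V] (hA : A.Finite) (hwf₁ : (ELP.mk A E R₁).wf)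
    (hwf₂ : (ELP.mk A E R₂).wf) (hΨ : Ψ ⊆ E)
    (hSE : ((ELP.mk A E R₁).eReduct Ψ).SE ≠ ((ELP.mk A E R₂).eReduct Ψ).SE)
    (hre : (ELP.mk A E R₁).realizable Ψ ∨ (ELP.mk A E R₂).realizable Ψ) :
    ∃ Q : ELP V, Q.wf ∧ ¬ ((ELP.mk A E R₁).union Q).cwvEq ((ELP.mk A E R₂).union Q) := by
  wlog h₁ : (ELP.mk A E R₁).realizable Ψ generalizing R₁ R₂
  · obtain ⟨Q, hQ, hQne⟩ := this hwf₂ hwf₁ hSE.symm hre.symm (hre.resolve_left h₁)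
    exact ⟨Q, hQ, mt ELP.cwvEq_comm.1 hQne⟩
  by_cases h₂ : (ELP.mk A E R₂).realizable Ψ
  · obtain ⟨p, hp₁, hp₂, hacc⟩ := Program.exists_accepts_ne_of_SE_ne hSE rfl
    -- the side rejecting `p` is used, so that `p` adds no answer set there
    by_cases hacc₁ : ((ELP.mk A E R₁).eReduct Ψ).accepts p
    · obtain ⟨Q, hQ, hQne⟩ := exists_not_cwvEq_of_accepts_ne hA hwf₂ hwf₁ hΨ h₂ hp₁ hp₂
        (fun h => hacc h.symm) (fun hacc₂ => absurd (iff_of_true hacc₁ hacc₂) hacc)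
      exact ⟨Q, hQ, mt ELP.cwvEq_comm.1 hQne⟩
    · exact exists_not_cwvEq_of_accepts_ne hA hwf₁ hwf₂ hΨ h₁ hp₁ hp₂ hacc (absurd · hacc₁)
  · obtain ⟨I', hI', hcomp⟩ := id h₁
    obtain ⟨J, hJ, hJ₂⟩ : ∃ J ∈ I', ¬ ((ELP.mk A E R₂).eReduct Ψ).model J := by
      by_contra! h
      exact h₂ ⟨I', fun J hJ => ⟨(hI' hJ).1, h J hJ⟩, hcomp⟩
    refine exists_not_cwvEq_of_accepts_ne hA hwf₁ hwf₂ hΨ h₁ (p := (J, J)) subset_rfl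
      (hI' hJ).1 (fun h => ?_) fun _ ℓ hℓ => hcomp.2.2 ℓ hℓ J hJ
    exact hJ₂ (Program.diag_mem_SE_iff.1
      (h.1 ⟨Program.diag_mem_SE_iff.2 (hI' hJ), Or.inl rfl⟩).1).2

theorem exists_not_cwvEq_of_SEfun_ne [Infinite V] (hA : A.Finite)
    (hwf₁ : (ELP.mk A E R₁).wf) (hwf₂ : (ELP.mk A E R₂).wf) {Φ : Set (Lit V)}
    (hne : (ELP.mk A E R₁).SEfun Φ ≠ (ELP.mk A E R₂).SEfun Φ) :
    ∃ Q : ELP V, Q.wf ∧ ¬ ((ELP.mk A E R₁).union Q).cwvEq ((ELP.mk A E R₂).union Q) := by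
  refine exists_not_cwvEq_of_SE_ne hA hwf₁ hwf₂ (Ψ := Φ ∩ E) Set.inter_subset_right
    (fun hSE => ?_) ?_
  · refine hne (ELP.SEfun_eq_of_SE_eq rfl ?_)
    rwa [← ELP.eReduct_inter hwf₁, ← ELP.eReduct_inter hwf₂]
  · by_contra! h
    rw [ELP.SEfun_of_not_realizable fun h' => h.1 (h'.inter hwf₁),
      ELP.SEfun_of_not_realizable fun h' => h.2 (h'.inter hwf₂)] at hne
    exact hne rfl

end Completeness

/-- Two ELPs over the same finite atom domain and epistemic-literal domain
are strongly equivalent (strongly ELP-CWV-equivalent) iff they have the same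
SE-function. -/
theorem stmt8 {V : Type} [Infinite V] (A : Set V) (hA : A.Finite) (E : Set (Lit V))
    (R₁ R₂ : Set (ERule V))
    (hwf₁ : (ELP.mk A E R₁).wf) (hwf₂ : (ELP.mk A E R₂).wf) :
    ELP.strongELPCWVEq (ELP.mk A E R₁) (ELP.mk A E R₂) ↔
      ∀ Φ : Set (Lit V), (ELP.mk A E R₁).SEfun Φ = (ELP.mk A E R₂).SEfun Φ := by
  refine ⟨fun hstrong Φ => ?_, fun h Q _ M => ?_⟩
  · by_contra hne
    obtain ⟨Q, hQ, hQne⟩ := exists_not_cwvEq_of_SEfun_ne hA hwf₁ hwf₂ hne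
    exact hQne (hstrong Q hQ)
  · exact ⟨ELP.isCWV_union_of_SEfun_eq hwf₁ hwf₂ h Q,
      ELP.isCWV_union_of_SEfun_eq hwf₂ hwf₁ (fun Φ => (h Φ).symm) Q⟩
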